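/- arXiv:2103.06792 — 12 statements merged into one kernel-verified Lean document; each statement's English description precedes it below -/
import Mathlib

section
/- Let H be a complex Hilbert space, let A be a (possibly unbounded) linear operator in H given as a linear partial map, and let ω ∈ ℝ and r > 0. Assume that for every z ∈ ℂ with Re z > ω there is a bounded linear operator R(z) : H → H with ‖R(z)‖ ≤ 1/r such that R(z) maps H into the domain of A, (z·R(z)x − A(R(z)x)) = x for every x ∈ H, and R(z)(z·y − A y) = y for every y in the domain of A. Then for every ω' with ω − r < ω' ≤ ω and every z ∈ ℂ with Re z > ω', there is a bounded linear operator R'(z) with the same two-sided inverse properties for z − A and with ‖R'(z)‖ ≤ 1/(r − (ω − ω')). -/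
/-!
Fix `z` with `Re z > ω'` and put `s = ω - ω'`, so that `0 ≤ s < r` and `Re (z + s) > ω`.
With `R₀` the given resolvent at `z + s`, we have `z - A = (z + s - A) (1 - s R₀)` on the domain of `A`,
and `‖s R₀‖ ≤ s / r < 1`, so the Neumann series inverts `1 - s R₀` and `R₀ (1 - s R₀)⁻¹` is a
two-sided inverse of `z - A` of norm at most `‖R₀‖ / (1 - s ‖R₀‖) ≤ 1 / (r - s)`.
-/

/-- `R` is a bounded two-sided inverse of `z - A` for the (possibly unbounded)
operator `A` given as a linear partial map. -/
def IsTwoSidedResolvent {H : Type*} [NormedAddCommGroup H] [InnerProductSpace ℂ H]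
    (A : H →ₗ.[ℂ] H) (z : ℂ) (R : H →L[ℂ] H) : Prop :=
  (∀ x : H, ∃ hx : R x ∈ A.domain, z • R x - A ⟨R x, hx⟩ = x) ∧
  (∀ y : A.domain, R (z • (y : H) - A y) = y)

theorem norm_mul_units_inv_mul_one_sub_norm_le {E : Type*} [NormedRing E] {a t : E} (u : Eˣ)
    (hu : (u : E) = 1 - t) (hat : Commute a t) :
    ‖a * ↑u⁻¹‖ * (1 - ‖t‖) ≤ ‖a‖ := by
  have hinv : (↑u⁻¹ : E) = 1 + t * ↑u⁻¹ := by
    have h := u.mul_inv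
    rw [hu, sub_mul, one_mul, sub_eq_iff_eq_add] at h
    exact h
  have hexpand : a * ↑u⁻¹ = a + t * (a * ↑u⁻¹) := by
    conv_lhs => rw [hinv]
    rw [mul_add, mul_one, ← mul_assoc, ← mul_assoc, hat.eq]
  have : ‖a * ↑u⁻¹‖ ≤ ‖a‖ + ‖t‖ * ‖a * ↑u⁻¹‖ :=
    calc ‖a * ↑u⁻¹‖ = ‖a + t * (a * ↑u⁻¹)‖ := by rw [← hexpand]
      _ ≤ ‖a‖ + ‖t * (a * ↑u⁻¹)‖ := norm_add_le _ _
      _ ≤ ‖a‖ + ‖t‖ * ‖a * ↑u⁻¹‖ := by gcongr; exact norm_mul_le _ _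
  linarith

namespace IsTwoSidedResolvent

variable {H : Type*} [NormedAddCommGroup H] [InnerProductSpace ℂ H] {A : H →ₗ.[ℂ] H}

theorem mul_units_inv {w z : ℂ} {R : H →L[ℂ] H} (hR : IsTwoSidedResolvent A w R)
    (u : (H →L[ℂ] H)ˣ) (hu : (u : H →L[ℂ] H) = 1 - (w - z) • R) :
    IsTwoSidedResolvent A z (R * ↑u⁻¹) := by
  have hshift : ∀ (y : H) (hy : y ∈ A.domain),
      z • y - A ⟨y, hy⟩ = (w • y - A ⟨y, hy⟩) - (w - z) • y := by
    intro y hy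
    rw [sub_smul]; abel
  have hu_apply : ∀ y : H, (u : H →L[ℂ] H) y = y - (w - z) • R y := by
    intro y; rw [hu]; rfl
  constructor
  · intro x
    obtain ⟨hx, hfx⟩ := hR.1 ((↑u⁻¹ : H →L[ℂ] H) x)
    refine ⟨hx, ?_⟩
    change z • R ((↑u⁻¹ : H →L[ℂ] H) x) - A ⟨_, hx⟩ = x
    rw [hshift, hfx, ← hu_apply, ← mul_apply_eq_comp, u.mul_inv, one_apply_eq_self]
  · intro y
    have hcomm : Commute R (u : H →L[ℂ] H) := by
      rw [hu]
      exact (Commute.one_right R).sub_right ((Commute.refl R).smul_right _)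
    rw [hcomm.units_inv_right.eq, mul_apply_eq_comp, hshift y y.2, map_sub, hR.2,
      map_smul, ← hu_apply, ← mul_apply_eq_comp, u.inv_mul, one_apply_eq_self]

end IsTwoSidedResolvent

theorem stmt_0_general {H : Type*} [NormedAddCommGroup H] [InnerProductSpace ℂ H] [CompleteSpace H]
    (A : H →ₗ.[ℂ] H) (ω r : ℝ)
    (hres : ∀ z : ℂ, ω < z.re →
      ∃ R : H →L[ℂ] H, ‖R‖ ≤ 1 / r ∧ IsTwoSidedResolvent A z R) :
    ∀ ω' : ℝ, ω - r < ω' → ω' ≤ ω → ∀ z : ℂ, ω' < z.re →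
      ∃ R : H →L[ℂ] H, ‖R‖ ≤ 1 / (r - (ω - ω')) ∧ IsTwoSidedResolvent A z R := by
  intro ω' hω'r hω'ω z hz
  set s : ℝ := ω - ω'
  have hs : 0 ≤ s := sub_nonneg.mpr hω'ω
  have hsr : s < r := by linarith
  have hr : 0 < r := hs.trans_lt hsr
  have hzs : ω < (z + s).re := by
    simp only [Complex.add_re, Complex.ofReal_re]; linarith
  obtain ⟨R₀, hR₀, hres₀⟩ := hres (z + s) hzs
  have ht : ‖(s : ℂ) • R₀‖ ≤ s / r := by
    rw [norm_smul, Complex.norm_real, Real.norm_of_nonneg hs, div_eq_mul_one_div]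
    exact mul_le_mul_of_nonneg_left hR₀ hs
  have ht₁ : ‖(s : ℂ) • R₀‖ < 1 := ht.trans_lt ((div_lt_one hr).mpr hsr)
  set u := Units.oneSub _ ht₁
  refine ⟨R₀ * ↑u⁻¹, ?_, hres₀.mul_units_inv u (by rw [add_sub_cancel_left]; rfl)⟩
  have hbound := norm_mul_units_inv_mul_one_sub_norm_le u rfl ((Commute.refl R₀).smul_right _)
  have hR : ‖R₀ * ↑u⁻¹‖ * (1 - s / r) ≤ 1 / r :=
    calc ‖R₀ * ↑u⁻¹‖ * (1 - s / r) ≤ ‖R₀ * ↑u⁻¹‖ * (1 - ‖(s : ℂ) • R₀‖) := by gcongr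
      _ ≤ 1 / r := hbound.trans hR₀
  rw [le_div_iff₀ (by linarith)]
  calc ‖R₀ * ↑u⁻¹‖ * (r - s) = r * (‖R₀ * ↑u⁻¹‖ * (1 - s / r)) := by field_simp
    _ ≤ r * (1 / r) := by gcongr
    _ = 1 := mul_one_div_cancel hr.ne'

theorem stmt_0 {H : Type*} [NormedAddCommGroup H] [InnerProductSpace ℂ H] [CompleteSpace H]
    (A : H →ₗ.[ℂ] H) (ω r : ℝ) (hr : 0 < r)
    (hres : ∀ z : ℂ, ω < z.re →
      ∃ R : H →L[ℂ] H, ‖R‖ ≤ 1 / r ∧ IsTwoSidedResolvent A z R) :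
    ∀ ω' : ℝ, ω - r < ω' → ω' ≤ ω → ∀ z : ℂ, ω' < z.re →
      ∃ R : H →L[ℂ] H, ‖R‖ ≤ 1 / (r - (ω - ω')) ∧ IsTwoSidedResolvent A z R :=
  stmt_0_general A ω r hres
end

section
/- Let t > 0 and let F : [0,t] → ℝ be continuous with F ≥ 0 and F not identically zero on [0,t]. Then the infimum, taken over all continuous M : [0,t] → ℝ with M ≥ 0 and ∫₀ᵗ M(s) ds = 1, of the supremum over s ∈ [0,t] of M(s)/F(s) — the quotient computed in the extended nonnegative reals [0,∞], with the conventions c/0 = ∞ for c > 0 and 0/0 = 0 — is equal to 1/∫₀ᵗ F(s) ds. -/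
/-!
If `S` is the supremum of `M / F` on `[0, t]`, then `M ≤ S F` pointwise, and integrating gives
`1 = ∫ M ≤ S ∫ F`; so no admissible `M` does better than `1 / ∫ F`. The normalized density
`F / ∫ F` attains this value: its ratio to `F` is `1 / ∫ F` where `F > 0` and `0 / 0 = 0` where
`F = 0`.
-/

open Set ENNReal

lemma ENNReal.div_div_self_le_inv (a b : ℝ≥0∞) : a / b / a ≤ b⁻¹ :=
  calc a / b / a = a * a⁻¹ * b⁻¹ := by rw [div_eq_mul_inv, div_eq_mul_inv, mul_right_comm]
    _ ≤ 1 * b⁻¹ := by gcongr; exact a.mul_inv_le_one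
    _ = b⁻¹ := one_mul _

lemma ofReal_div_div_ofReal_le_inv (x : ℝ) {c : ℝ} (hc : 0 < c) :
    ENNReal.ofReal (x / c) / ENNReal.ofReal x ≤ (ENNReal.ofReal c)⁻¹ := by
  rw [ofReal_div_of_pos hc]
  exact ENNReal.div_div_self_le_inv _ _

lemma le_toReal_mul_of_ofReal_div_le {x y : ℝ} {c : ℝ≥0∞} (hy : 0 ≤ y) (hc : c ≠ ∞)
    (h : ENNReal.ofReal x / ENNReal.ofReal y ≤ c) : x ≤ c.toReal * y := by
  have hxy : ENNReal.ofReal x ≤ c * ENNReal.ofReal y :=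
    (ENNReal.div_le_iff_le_mul (Or.inr hc) (Or.inl ofReal_ne_top)).1 h
  rw [← ofReal_toReal hc, ← ofReal_mul toReal_nonneg] at hxy
  exact (ofReal_le_ofReal_iff (mul_nonneg toReal_nonneg hy)).1 hxy

theorem ofReal_integral_div_le_iSup_ofReal_div {a b : ℝ} {M F : ℝ → ℝ} (hab : a ≤ b)
    (hM : IntervalIntegrable M MeasureTheory.volume a b)
    (hF : IntervalIntegrable F MeasureTheory.volume a b) (hF₀ : ∀ s ∈ Icc a b, 0 ≤ F s) :
    ENNReal.ofReal (∫ s in a..b, M s) / ENNReal.ofReal (∫ s in a..b, F s)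
      ≤ ⨆ s ∈ Icc a b, ENNReal.ofReal (M s) / ENNReal.ofReal (F s) := by
  set S := ⨆ s ∈ Icc a b, ENNReal.ofReal (M s) / ENNReal.ofReal (F s)
  rcases eq_or_ne S ∞ with hS | hS
  · exact hS ▸ le_top
  have hMF : ∀ s ∈ Icc a b, M s ≤ S.toReal * F s := fun s hs =>
    le_toReal_mul_of_ofReal_div_le (hF₀ s hs) hS
      (le_biSup (fun s => ENNReal.ofReal (M s) / ENNReal.ofReal (F s)) hs)
  refine div_le_of_le_mul ?_
  calc ENNReal.ofReal (∫ s in a..b, M s) ≤ ENNReal.ofReal (∫ s in a..b, S.toReal * F s) :=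
        ofReal_le_ofReal (intervalIntegral.integral_mono_on hab hM (hF.const_mul _) hMF)
    _ = S * ENNReal.ofReal (∫ s in a..b, F s) := by
        rw [intervalIntegral.integral_const_mul, ofReal_mul toReal_nonneg, ofReal_toReal hS]

theorem stmt_1 (t : ℝ) (ht : 0 < t) (F : ℝ → ℝ)
    (hFcont : ContinuousOn F (Icc 0 t))
    (hFnonneg : ∀ s ∈ Icc (0 : ℝ) t, 0 ≤ F s)
    (hFne : ∃ s ∈ Icc (0 : ℝ) t, F s ≠ 0) :
    (⨅ M : {M : ℝ → ℝ // ContinuousOn M (Icc 0 t) ∧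
        (∀ s ∈ Icc (0 : ℝ) t, 0 ≤ M s) ∧ (∫ s in (0 : ℝ)..t, M s) = 1},
      ⨆ s ∈ Icc (0 : ℝ) t, ENNReal.ofReal ((M : ℝ → ℝ) s) / ENNReal.ofReal (F s))
    = (ENNReal.ofReal (∫ s in (0 : ℝ)..t, F s))⁻¹ := by
  set I := ∫ s in (0 : ℝ)..t, F s with hI_def
  have hI : 0 < I := by
    obtain ⟨s₀, hs₀, hFs₀⟩ := hFne
    exact intervalIntegral.integral_pos ht hFcont (fun s hs => hFnonneg s (Ioc_subset_Icc_self hs))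
      ⟨s₀, hs₀, (hFnonneg s₀ hs₀).lt_of_ne' hFs₀⟩
  have hFI : (∫ s in (0 : ℝ)..t, F s / I) = 1 := by
    rw [intervalIntegral.integral_div, ← hI_def, div_self hI.ne']
  refine le_antisymm ?_ (le_iInf fun ⟨M, hMcont, _, hM⟩ => ?_)
  · refine (iInf_le _ ⟨fun s => F s / I, hFcont.div_const I,
      fun s hs => div_nonneg (hFnonneg s hs) hI.le, hFI⟩).trans ?_
    exact iSup₂_le fun s _ => ofReal_div_div_ofReal_le_inv (F s) hI
  · simpa [hM] using ofReal_integral_div_le_iSup_ofReal_div ht.le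
      (hMcont.intervalIntegrable_of_Icc ht.le) (hFcont.intervalIntegrable_of_Icc ht.le) hFnonneg
end

section
/- Let a > 0 and let m : [0,a] → ℝ be continuously differentiable with m > 0. Then the infimum over all continuously differentiable u : [0,a] → ℝ with u(0) = 0 and u(a) = 1 of ∫₀ᵃ max(u'(s)² − u(s)², 0) · m(s)² ds is equal to the infimum over the smaller class of continuously differentiable u : [0,a] → ℝ with u(0) = 0, u(a) = 1 and 0 ≤ u(s) ≤ u'(s) for all s ∈ [0,a], of ∫₀ᵃ (u'(s)² − u(s)²) · m(s)² ds. -/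
/-!
Given an admissible `u`, put `f = (u'² - u²)₊` and solve `v' = √(v² + f)`, `v 0 = 0`.
Then `v' ≥ v ≥ 0` and `v'² - v² = f`, while `u' ≤ √(u² + f)` makes `u` a subsolution of the
same equation, so `u ≤ v` and `c = v a ≥ 1`. The competitor `v / c` lies in the smaller class,
and its energy is `c⁻²` times the energy of `u`.
-/

open Set Real
open scoped NNReal

lemma sqrt_sq_add_eq_norm {c : ℝ} (hc : 0 ≤ c) (x : ℝ) :
    √(x ^ 2 + c) = ‖(x : ℂ) + √c * Complex.I‖ := by
  rw [Complex.norm_add_mul_I, sq_sqrt hc]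

lemma lipschitzWith_sqrt_sq_add {c : ℝ} (hc : 0 ≤ c) :
    LipschitzWith 1 fun x : ℝ => √(x ^ 2 + c) := by
  refine LipschitzWith.of_dist_le_mul fun x y => ?_
  simp only [sqrt_sq_add_eq_norm hc, NNReal.coe_one, one_mul, Real.dist_eq]
  refine (abs_norm_sub_norm_le _ _).trans ?_
  rw [add_sub_add_right_eq_sub, ← Complex.ofReal_sub, Complex.norm_real, Real.norm_eq_abs]

lemma sqrt_sq_add_le_add_sqrt {b c : ℝ} (hb : 0 ≤ b) (hc : 0 ≤ c) : √(b ^ 2 + c) ≤ b + √c := by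
  rw [sqrt_sq_add_eq_norm hc]
  simpa [abs_of_nonneg hb, abs_of_nonneg (sqrt_nonneg c)] using norm_add_le (b : ℂ) (√c * Complex.I)

theorem exists_forall_mem_Icc_hasDerivWithinAt_of_lipschitzWith_of_norm_le
    {E : Type*} [NormedAddCommGroup E] [NormedSpace ℝ E] [CompleteSpace E]
    {F : ℝ → E → E} {b c : ℝ} (hbc : b ≤ c) {K L : ℝ≥0}
    (hlip : ∀ t ∈ Icc b c, LipschitzWith K (F t))
    (hcont : ∀ x, ContinuousOn (F · x) (Icc b c))
    (hbound : ∀ t ∈ Icc b c, ∀ x, ‖F t x‖ ≤ L) (x₀ : E) :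
    ∃ α : ℝ → E, α b = x₀ ∧
      ∀ t ∈ Icc b c, HasDerivWithinAt α (F t (α t)) (Icc b c) t := by
  have hpl : IsPicardLindelof F ⟨b, left_mem_Icc.2 hbc⟩ x₀ (L * ⟨c - b, sub_nonneg.2 hbc⟩) 0 L K :=
    { lipschitzOnWith := fun t ht => (hlip t ht).lipschitzOnWith
      continuousOn := fun x _ => hcont x
      norm_le := fun t ht x _ => hbound t ht x
      mul_max_le := by simp [hbc]; rfl }
  exact hpl.exists_eq_forall_mem_Icc_hasDerivWithinAt₀

theorem exists_nonneg_hasDerivWithinAt_sqrt_sq_add {a : ℝ} (ha : 0 ≤ a) {f : ℝ → ℝ}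
    (hf : ContinuousOn f (Icc 0 a)) (hf₀ : ∀ t ∈ Icc 0 a, 0 ≤ f t) :
    ∃ v : ℝ → ℝ, v 0 = 0 ∧ (∀ t ∈ Icc 0 a, 0 ≤ v t) ∧
      ∀ t ∈ Icc 0 a, HasDerivWithinAt v (√(v t ^ 2 + f t)) (Icc 0 a) t := by
  obtain ⟨M, hM⟩ := isCompact_Icc.bddAbove_image hf
  have hfM : ∀ t ∈ Icc 0 a, f t ≤ M := fun t ht => hM (mem_image_of_mem f ht)
  -- The field is cut off at height `P`, which the solution never reaches by Grönwall.
  set P := √M * exp a + 1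
  obtain ⟨v, hv₀, hv⟩ := exists_forall_mem_Icc_hasDerivWithinAt_of_lipschitzWith_of_norm_le ha
    (F := fun t x => √(min |x| P ^ 2 + f t)) (K := 1) (L := ⟨√(P ^ 2 + M), sqrt_nonneg _⟩)
    (fun t ht => by
      have := (lipschitzWith_sqrt_sq_add (hf₀ t ht)).comp
        ((lipschitzWith_one_norm (E := ℝ)).min_const P)
      rwa [mul_one] at this)
    (fun x => (continuousOn_const.add hf).sqrt)
    (fun t ht x => by
      have hxP : min |x| P ^ 2 ≤ P ^ 2 :=
        pow_le_pow_left₀ (le_min (abs_nonneg x) (by positivity)) (min_le_right _ _) 2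
      rw [Real.norm_of_nonneg (sqrt_nonneg _)]
      exact sqrt_le_sqrt (add_le_add hxP (hfM t ht)))
    0
  have hv_cont : ContinuousOn v (Icc 0 a) := HasDerivWithinAt.continuousOn hv
  have hv_nonneg : ∀ t ∈ Icc 0 a, 0 ≤ v t := by
    have hmono : MonotoneOn v (Icc 0 a) :=
      monotoneOn_of_hasDerivWithinAt_nonneg (convex_Icc 0 a) hv_cont
        (fun t ht => (hv t (interior_subset ht)).mono interior_subset) (fun _ _ => sqrt_nonneg _)
    exact fun t ht => hv₀ ▸ hmono (left_mem_Icc.2 ha) ht ht.1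
  have hv_le : ∀ t ∈ Icc 0 a, v t ≤ √M * (exp t - 1) := by
    intro t ht
    have := le_gronwallBound_of_liminf_deriv_right_le (δ := 0) (K := 1) (ε := √M) hv_cont
      (fun x hx r hr => ((hv x (Ico_subset_Icc_self hx)).mono_of_mem_nhdsWithin
        (Icc_mem_nhdsGE_of_mem hx)).liminf_right_slope_le hr) hv₀.le
      (fun x hx => ?_) t ht
    · simpa [gronwallBound_of_K_ne_0] using this
    have hvx := hv_nonneg x (Ico_subset_Icc_self hx)
    calc √(min |v x| P ^ 2 + f x) ≤ min |v x| P + √(f x) :=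
          sqrt_sq_add_le_add_sqrt (le_min (abs_nonneg _) (by positivity))
            (hf₀ x (Ico_subset_Icc_self hx))
      _ ≤ 1 * v x + √M := by
          rw [one_mul, abs_of_nonneg hvx]
          exact add_le_add (min_le_left _ _) (sqrt_le_sqrt (hfM x (Ico_subset_Icc_self hx)))
  refine ⟨v, hv₀, hv_nonneg, fun t ht => ?_⟩
  have hvP : min |v t| P = v t := by
    rw [abs_of_nonneg (hv_nonneg t ht), min_eq_left]
    have : √M * (exp t - 1) ≤ √M * exp a :=
      mul_le_mul_of_nonneg_left (by linarith [exp_le_exp.2 ht.2]) (sqrt_nonneg _)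
    linarith [hv_le t ht]
  simpa only [hvP] using hv t ht

theorem ODE_comparison_of_mem_Icc_right {F : ℝ → ℝ → ℝ} {K : ℝ≥0} {a b : ℝ}
    {u u' v v' : ℝ → ℝ} (hF : ∀ t ∈ Ico a b, LipschitzWith K (F t))
    (hu : ∀ t ∈ Icc a b, HasDerivWithinAt u (u' t) (Icc a b) t)
    (hv : ∀ t ∈ Icc a b, HasDerivWithinAt v (v' t) (Icc a b) t)
    (hu'F : ∀ t ∈ Ico a b, u' t ≤ F t (u t)) (hFv' : ∀ t ∈ Ico a b, F t (v t) ≤ v' t)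
    (ha : u a ≤ v a) : ∀ t ∈ Icc a b, u t ≤ v t := by
  have right_deriv {g g' : ℝ → ℝ} (hg : ∀ t ∈ Icc a b, HasDerivWithinAt g (g' t) (Icc a b) t)
      (t : ℝ) (ht : t ∈ Ico a b) : HasDerivWithinAt g (g' t) (Ici t) t :=
    (hg t (Ico_subset_Icc_self ht)).mono_of_mem_nhdsWithin (Icc_mem_nhdsGE_of_mem ht)
  -- At a first contact with the fence `v + ε e^{(K+1)t}`, the fence grows faster than `u`.
  have fence : ∀ ε > 0, ∀ t ∈ Icc a b, u t ≤ v t + ε * exp ((K + 1) * t) := by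
    intro ε hε
    have hg (x : ℝ) : HasDerivAt (fun t => ε * exp ((K + 1) * t))
        ((K + 1) * (ε * exp ((K + 1) * x))) x :=
      (((hasDerivAt_id' x).const_mul ((K : ℝ) + 1)).exp.const_mul ε).congr_deriv (by ring)
    refine image_le_of_deriv_right_lt_deriv_boundary' (HasDerivWithinAt.continuousOn hu)
      (right_deriv hu) (le_add_of_le_of_nonneg ha (by positivity))
      ((HasDerivWithinAt.continuousOn hv).add (by fun_prop))
      (fun x hx => (right_deriv hv x hx).add (hg x).hasDerivWithinAt) ?_
    intro x hx hux
    have hdist : dist (u x) (v x) = ε * exp ((K + 1) * x) := by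
      rw [Real.dist_eq, hux, add_sub_cancel_left, abs_of_pos (by positivity)]
    have hlip : F x (u x) - F x (v x) ≤ K * (ε * exp ((K + 1) * x)) :=
      calc _ ≤ dist (F x (u x)) (F x (v x)) := le_abs_self _
        _ ≤ K * dist (u x) (v x) := (hF x hx).dist_le_mul _ _
        _ = _ := by rw [hdist]
    have hgx : 0 < ε * exp ((K + 1) * x) := by positivity
    linarith [hu'F x hx, hFv' x hx]
  intro t ht
  refine le_of_forall_pos_le_add fun δ hδ => ?_
  have := fence (δ * exp (-((K + 1) * t))) (by positivity) t ht
  rwa [mul_assoc, ← exp_add, neg_add_cancel, exp_zero, mul_one] at this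

theorem exists_monotone_competitor_integral_le {a : ℝ} (ha : 0 ≤ a) (m : ℝ → ℝ)
    {u u' : ℝ → ℝ} (hu : ∀ s ∈ Icc 0 a, HasDerivWithinAt u (u' s) (Icc 0 a) s)
    (hu' : ContinuousOn u' (Icc 0 a)) (hu₀ : u 0 = 0) (hua : u a = 1) :
    ∃ w w' : ℝ → ℝ, (∀ s ∈ Icc 0 a, HasDerivWithinAt w (w' s) (Icc 0 a) s) ∧
      ContinuousOn w' (Icc 0 a) ∧ w 0 = 0 ∧ w a = 1 ∧
      (∀ s ∈ Icc 0 a, 0 ≤ w s ∧ w s ≤ w' s) ∧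
      ∫ s in 0..a, (w' s ^ 2 - w s ^ 2) * m s ^ 2 ≤
        ∫ s in 0..a, max (u' s ^ 2 - u s ^ 2) 0 * m s ^ 2 := by
  set f := fun s => max (u' s ^ 2 - u s ^ 2) 0
  have hf₀ (s : ℝ) : 0 ≤ f s := le_max_right _ _
  have hu_cont : ContinuousOn u (Icc 0 a) := HasDerivWithinAt.continuousOn hu
  have hf : ContinuousOn f (Icc 0 a) := ((hu'.pow 2).sub (hu_cont.pow 2)).sup continuousOn_const
  obtain ⟨v, hv₀, hv_nonneg, hv⟩ :=
    exists_nonneg_hasDerivWithinAt_sqrt_sq_add ha hf fun s _ => hf₀ s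
  have hc : 1 ≤ v a := hua ▸ ODE_comparison_of_mem_Icc_right
    (F := fun s x => √(x ^ 2 + f s)) (fun s _ => lipschitzWith_sqrt_sq_add (hf₀ s)) hu hv
    (fun s _ => le_sqrt_of_sq_le (by linarith [le_max_left (u' s ^ 2 - u s ^ 2) 0]))
    (fun _ _ => le_rfl) (hu₀.trans hv₀.symm).le a (right_mem_Icc.2 ha)
  have hc₀ : 0 < v a := one_pos.trans_le hc
  have henergy (s : ℝ) : ((√(v s ^ 2 + f s) / v a) ^ 2 - (v s / v a) ^ 2) * m s ^ 2 =
      (v a ^ 2)⁻¹ * (f s * m s ^ 2) := by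
    rw [div_pow, div_pow, sq_sqrt (by positivity)]
    field_simp
    ring
  refine ⟨fun s => v s / v a, fun s => √(v s ^ 2 + f s) / v a, fun s hs => (hv s hs).div_const _,
    ((((HasDerivWithinAt.continuousOn hv).pow 2).add hf).sqrt).div_const _,
    by simp [hv₀], div_self hc₀.ne', fun s hs => ⟨div_nonneg (hv_nonneg s hs) hc₀.le, ?_⟩, ?_⟩
  · refine div_le_div_of_nonneg_right ?_ hc₀.le
    exact le_sqrt_of_sq_le (le_add_of_nonneg_right (hf₀ s))
  · simp only [henergy, intervalIntegral.integral_const_mul]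
    refine mul_le_of_le_one_left ?_ (inv_le_one_of_one_le₀ (one_le_pow₀ hc))
    exact intervalIntegral.integral_nonneg ha fun s _ => mul_nonneg (hf₀ s) (sq_nonneg _)

theorem stmt_2_general (a : ℝ) (ha : 0 < a) (m : ℝ → ℝ) :
    sInf {I : ℝ | ∃ u u' : ℝ → ℝ,
        (∀ s ∈ Icc (0 : ℝ) a, HasDerivWithinAt u (u' s) (Icc 0 a) s) ∧
        ContinuousOn u' (Icc 0 a) ∧ u 0 = 0 ∧ u a = 1 ∧
        I = ∫ s in (0 : ℝ)..a, max (u' s ^ 2 - u s ^ 2) 0 * m s ^ 2}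
    = sInf {I : ℝ | ∃ u u' : ℝ → ℝ,
        (∀ s ∈ Icc (0 : ℝ) a, HasDerivWithinAt u (u' s) (Icc 0 a) s) ∧
        ContinuousOn u' (Icc 0 a) ∧ u 0 = 0 ∧ u a = 1 ∧
        (∀ s ∈ Icc (0 : ℝ) a, 0 ≤ u s ∧ u s ≤ u' s) ∧
        I = ∫ s in (0 : ℝ)..a, (u' s ^ 2 - u s ^ 2) * m s ^ 2} := by
  apply csInf_eq_csInf_of_forall_exists_le
  · rintro _ ⟨u, u', hu, hu', hu₀, hua, rfl⟩
    obtain ⟨w, w', hw, hw', hw₀, hwa, hww', hle⟩ :=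
      exists_monotone_competitor_integral_le ha.le m hu hu' hu₀ hua
    exact ⟨_, ⟨w, w', hw, hw', hw₀, hwa, hww', rfl⟩, hle⟩
  · rintro _ ⟨u, u', hu, hu', hu₀, hua, huu', rfl⟩
    refine ⟨_, ⟨u, u', hu, hu', hu₀, hua, rfl⟩, le_of_eq ?_⟩
    refine intervalIntegral.integral_congr fun s hs => ?_
    obtain ⟨hu_nonneg, hu_le⟩ := huu' s (uIcc_of_le ha.le ▸ hs)
    rw [max_eq_left (by nlinarith)]

theorem stmt_2 (a : ℝ) (ha : 0 < a) (m m' : ℝ → ℝ)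
    (hm : ∀ s ∈ Icc (0 : ℝ) a, HasDerivWithinAt m (m' s) (Icc 0 a) s)
    (hm'c : ContinuousOn m' (Icc 0 a))
    (hmpos : ∀ s ∈ Icc (0 : ℝ) a, 0 < m s) :
    sInf {I : ℝ | ∃ u u' : ℝ → ℝ,
        (∀ s ∈ Icc (0 : ℝ) a, HasDerivWithinAt u (u' s) (Icc 0 a) s) ∧
        ContinuousOn u' (Icc 0 a) ∧ u 0 = 0 ∧ u a = 1 ∧
        I = ∫ s in (0 : ℝ)..a, max (u' s ^ 2 - u s ^ 2) 0 * m s ^ 2}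
    = sInf {I : ℝ | ∃ u u' : ℝ → ℝ,
        (∀ s ∈ Icc (0 : ℝ) a, HasDerivWithinAt u (u' s) (Icc 0 a) s) ∧
        ContinuousOn u' (Icc 0 a) ∧ u 0 = 0 ∧ u a = 1 ∧
        (∀ s ∈ Icc (0 : ℝ) a, 0 ≤ u s ∧ u s ≤ u' s) ∧
        I = ∫ s in (0 : ℝ)..a, (u' s ^ 2 - u s ^ 2) * m s ^ 2} :=
  stmt_2_general a ha m
end

section
/- Let a > 0 and let u, v : [0,a] → ℝ be continuously differentiable with u(0) = v(0) = 0, u'(s) > 0 and v'(s) ≥ 0 for all s ∈ [0,a], and suppose v'(s)² − v(s)² = max(u'(s)² − u(s)², 0) for all s ∈ [0,a]. Then v(s) ≥ u(s) for all s ∈ [0,a]. -/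
/-!
Where `w = u - v` is nonnegative, `u'² - u² ≤ v'² - v²` gives `(u' - v')(u' + v') ≤ w (u + v)`, and
since `u' + v' ≥ u'` is bounded below by a positive constant on `[0, a]` while `u + v` is bounded,
this is a linear differential inequality `w' ≤ K w`. As `w(0) = 0`, a Grönwall-type argument gives
`w ≤ 0`.
-/

open Set

theorem nonpos_of_deriv_right_le_mul_of_pos {f f' : ℝ → ℝ} {a b K : ℝ}
    (hf : ContinuousOn f (Icc a b)) (hf' : ∀ x ∈ Ico a b, HasDerivWithinAt f (f' x) (Ici x) x)
    (ha : f a ≤ 0) (bound : ∀ x ∈ Ico a b, 0 < f x → f' x ≤ K * f x) :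
    ∀ x ∈ Icc a b, f x ≤ 0 := by
  -- `ε * exp ((|K| + 1) * x)` is a strict upper fence: where `f` touches it, `f` grows slower.
  have fence : ∀ ε > 0, ∀ x ∈ Icc a b, f x ≤ ε * Real.exp ((|K| + 1) * x) := by
    intro ε hε
    have hB : ∀ x, HasDerivAt (fun x ↦ ε * Real.exp ((|K| + 1) * x))
        ((|K| + 1) * (ε * Real.exp ((|K| + 1) * x))) x := fun x ↦ by
      simpa [mul_comm, mul_left_comm] using
        (((hasDerivAt_id x).const_mul (|K| + 1)).exp).const_mul ε
    refine image_le_of_deriv_right_lt_deriv_boundary hf hf' (ha.trans (by positivity)) hB ?_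
    intro x hx hfx
    have hpos : 0 < f x := hfx ▸ by positivity
    calc f' x ≤ K * f x := bound x hx hpos
      _ ≤ |K| * f x := by gcongr; exact le_abs_self K
      _ < (|K| + 1) * f x := by linarith
      _ = _ := by rw [hfx]
  intro x hx
  refine le_of_forall_pos_le_add fun δ hδ ↦ ?_
  have := fence (δ / Real.exp ((|K| + 1) * x)) (by positivity) x hx
  rwa [div_mul_cancel₀ _ (Real.exp_pos _).ne', ← zero_add δ] at this

theorem sub_le_mul_sub_of_sq_sub_sq_le {x y x' y' m M : ℝ} (hm : 0 < m) (hm' : m ≤ x' + y')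
    (hM : |x + y| ≤ M) (hxy : 0 ≤ x - y) (h : x' ^ 2 - x ^ 2 ≤ y' ^ 2 - y ^ 2) :
    x' - y' ≤ M / m * (x - y) := by
  have hprod : (x' - y') * (x' + y') ≤ (x - y) * M := by
    nlinarith [le_abs_self (x + y)]
  rw [div_mul_eq_mul_div, le_div_iff₀ hm]
  rcases le_or_gt (x' - y') 0 with hneg | hpos
  · nlinarith [abs_nonneg (x + y)]
  · nlinarith

theorem stmt_3_general (a : ℝ) (u v u' v' : ℝ → ℝ)
    (hu : ∀ s ∈ Icc (0 : ℝ) a, HasDerivWithinAt u (u' s) (Icc 0 a) s)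
    (hv : ∀ s ∈ Icc (0 : ℝ) a, HasDerivWithinAt v (v' s) (Icc 0 a) s)
    (hu'c : ContinuousOn u' (Icc 0 a))
    (hu0 : u 0 = 0) (hv0 : v 0 = 0)
    (hu'pos : ∀ s ∈ Icc (0 : ℝ) a, 0 < u' s)
    (hv'nonneg : ∀ s ∈ Icc (0 : ℝ) a, 0 ≤ v' s)
    (heq : ∀ s ∈ Icc (0 : ℝ) a, v' s ^ 2 - v s ^ 2 = max (u' s ^ 2 - u s ^ 2) 0) :
    ∀ s ∈ Icc (0 : ℝ) a, u s ≤ v s := by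
  have huc : ContinuousOn u (Icc 0 a) := fun x hx ↦ (hu x hx).continuousWithinAt
  have hvc : ContinuousOn v (Icc 0 a) := fun x hx ↦ (hv x hx).continuousWithinAt
  obtain ⟨m, hm, hmu'⟩ := isCompact_Icc.exists_forall_le' hu'c hu'pos
  obtain ⟨M, hM⟩ := isCompact_Icc.exists_bound_of_continuousOn (huc.add hvc)
  have hderiv : ∀ x ∈ Ico (0 : ℝ) a, HasDerivWithinAt (u - v) (u' x - v' x) (Ici x) x :=
    fun x hx ↦ ((hu x (Ico_subset_Icc_self hx)).sub (hv x (Ico_subset_Icc_self hx)))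
      |>.mono_of_mem_nhdsWithin (Icc_mem_nhdsGE_of_mem hx)
  have hbound : ∀ x ∈ Ico (0 : ℝ) a, 0 < u x - v x → u' x - v' x ≤ M / m * (u x - v x) := by
    intro x hx hpos
    have hx := Ico_subset_Icc_self hx
    exact sub_le_mul_sub_of_sq_sub_sq_le hm (by linarith [hmu' x hx, hv'nonneg x hx]) (hM x hx)
      hpos.le ((heq x hx).ge.trans' (le_max_left _ _))
  intro s hs
  exact sub_nonpos.mp <| nonpos_of_deriv_right_le_mul_of_pos (huc.sub hvc) hderiv
    (by simp [hu0, hv0]) hbound s hs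

theorem stmt_3 (a : ℝ) (ha : 0 < a) (u v u' v' : ℝ → ℝ)
    (hu : ∀ s ∈ Icc (0 : ℝ) a, HasDerivWithinAt u (u' s) (Icc 0 a) s)
    (hv : ∀ s ∈ Icc (0 : ℝ) a, HasDerivWithinAt v (v' s) (Icc 0 a) s)
    (hu'c : ContinuousOn u' (Icc 0 a)) (hv'c : ContinuousOn v' (Icc 0 a))
    (hu0 : u 0 = 0) (hv0 : v 0 = 0)
    (hu'pos : ∀ s ∈ Icc (0 : ℝ) a, 0 < u' s)
    (hv'nonneg : ∀ s ∈ Icc (0 : ℝ) a, 0 ≤ v' s)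
    (heq : ∀ s ∈ Icc (0 : ℝ) a, v' s ^ 2 - v s ^ 2 = max (u' s ^ 2 - u s ^ 2) 0) :
    ∀ s ∈ Icc (0 : ℝ) a, u s ≤ v s :=
  stmt_3_general a u v u' v' hu hv hu'c hu0 hv0 hu'pos hv'nonneg heq
end

section
/- Let σ < τ be reals, let μ : [σ,τ) → ℝ be continuous, and let ψ : [σ,τ) → ℝ be differentiable with ψ'(s) = −(ψ(s)² + 2μ(s)ψ(s) + 1) for all s ∈ [σ,τ). Define f₊ : [σ,τ) → ℝ by f₊(s) = 1 if μ(s) ≥ −1 and f₊(s) = −μ(s) + √(μ(s)² − 1) if μ(s) < −1. Then for all s₀, s with σ ≤ s₀ ≤ s < τ one has ψ(s) ≤ max( ψ(s₀), max_{σ' ∈ [s₀,s]} f₊(σ') ). -/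
/-!
Where `ψ` lies above the barrier `f₊`, the quadratic `ψ² + 2μψ + 1` is positive, so `ψ` is
strictly decreasing there. Hence `ψ` can never cross a constant level `M + ε` lying above both
`ψ(s₀)` and the barrier on `[s₀, s]`; letting `ε → 0` gives the bound.
-/

open Set

theorem image_le_max_of_deriv_right_neg_of_gt {f f' : ℝ → ℝ} {a b M : ℝ}
    (hf : ContinuousOn f (Icc a b)) (hf' : ∀ x ∈ Ico a b, HasDerivWithinAt f (f' x) (Ici x) x)
    (hneg : ∀ x ∈ Ico a b, M < f x → f' x < 0) :
    ∀ ⦃x⦄, x ∈ Icc a b → f x ≤ max (f a) M := by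
  intro x hx
  refine le_of_forall_pos_le_add fun ε hε => ?_
  refine image_le_of_deriv_right_lt_deriv_boundary (B := fun _ => max (f a) M + ε) (B' := 0)
    hf hf' ?_ (fun _ => hasDerivAt_const _ _) (fun y hy hfy => hneg y hy ?_) hx
  · linarith [le_max_left (f a) M]
  · linarith [le_max_right (f a) M]

/-- For `m < -1` this is the larger root of `y ² + 2 m y + 1`; for `m ≥ -1` that quadratic has
no root above `1`. -/
noncomputable def riccatiBarrier (m : ℝ) : ℝ :=
  if -1 ≤ m then 1 else -m + Real.sqrt (m ^ 2 - 1)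

theorem riccati_quadratic_pos_of_barrier_lt {m y : ℝ} (h : riccatiBarrier m < y) :
    0 < y ^ 2 + 2 * m * y + 1 := by
  unfold riccatiBarrier at h
  split_ifs at h with hm
  · nlinarith
  · have hr : Real.sqrt (m ^ 2 - 1) ^ 2 = m ^ 2 - 1 := Real.sq_sqrt (by nlinarith)
    have hr₀ : 0 ≤ Real.sqrt (m ^ 2 - 1) := Real.sqrt_nonneg _
    nlinarith [mul_pos (by linarith : 0 < y + m - Real.sqrt (m ^ 2 - 1))
      (by linarith : 0 < y + m + Real.sqrt (m ^ 2 - 1))]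

theorem riccatiBarrier_le (m : ℝ) : riccatiBarrier m ≤ 1 + 2 * |m| := by
  unfold riccatiBarrier
  split_ifs
  · linarith [abs_nonneg m]
  · have hsqrt : Real.sqrt (m ^ 2 - 1) ≤ |m| := by
      rw [← Real.sqrt_sq_eq_abs]
      exact Real.sqrt_le_sqrt (by linarith)
    linarith [neg_le_abs m]

theorem bddAbove_riccatiBarrier_image {α : Type*} [TopologicalSpace α] {μ : α → ℝ} {K : Set α}
    (hK : IsCompact K) (hμ : ContinuousOn μ K) :
    BddAbove ((fun x => riccatiBarrier (μ x)) '' K) := by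
  obtain ⟨C, hC⟩ := hK.exists_bound_of_continuousOn hμ
  refine ⟨1 + 2 * C, forall_mem_image.2 fun x hx => (riccatiBarrier_le (μ x)).trans ?_⟩
  linarith [hC x hx, Real.norm_eq_abs (μ x)]

theorem stmt_5_general (σ τ : ℝ) (μ ψ : ℝ → ℝ)
    (hμ : ContinuousOn μ (Ico σ τ))
    (hψ : ∀ s ∈ Ico σ τ,
      HasDerivWithinAt ψ (-(ψ s ^ 2 + 2 * μ s * ψ s + 1)) (Ico σ τ) s) :
    ∀ s₀ ∈ Ico σ τ, ∀ s ∈ Ico σ τ, s₀ ≤ s →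
      ψ s ≤ max (ψ s₀)
        (sSup ((fun x => if -1 ≤ μ x then 1 else -μ x + Real.sqrt (μ x ^ 2 - 1)) ''
          Icc s₀ s)) := by
  intro s₀ hs₀ s hs hle
  change ψ s ≤ max (ψ s₀) (sSup ((fun x => riccatiBarrier (μ x)) '' Icc s₀ s))
  have hsub : Icc s₀ s ⊆ Ico σ τ := Icc_subset_Ico hs₀.1 hs.2
  have hbdd := bddAbove_riccatiBarrier_image isCompact_Icc (hμ.mono hsub)
  refine image_le_max_of_deriv_right_neg_of_gt (f' := fun x => -(ψ x ^ 2 + 2 * μ x * ψ x + 1))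
    (fun x hx => (hψ x (hsub hx)).continuousWithinAt.mono hsub)
    (fun x hx => ?_) (fun x hx hgt => ?_) (right_mem_Icc.2 hle)
  · have hx' := hsub (Ico_subset_Icc_self hx)
    exact (hψ x hx').mono_of_mem_nhdsWithin (Ico_mem_nhdsGE_of_mem hx')
  · have hbarrier := le_csSup hbdd (mem_image_of_mem _ (Ico_subset_Icc_self hx))
    exact neg_neg_of_pos (riccati_quadratic_pos_of_barrier_lt (hbarrier.trans_lt hgt))

theorem stmt_5 (σ τ : ℝ) (hστ : σ < τ) (μ ψ : ℝ → ℝ)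
    (hμ : ContinuousOn μ (Ico σ τ))
    (hψ : ∀ s ∈ Ico σ τ,
      HasDerivWithinAt ψ (-(ψ s ^ 2 + 2 * μ s * ψ s + 1)) (Ico σ τ) s) :
    ∀ s₀ ∈ Ico σ τ, ∀ s ∈ Ico σ τ, s₀ ≤ s →
      ψ s ≤ max (ψ s₀)
        (sSup ((fun x => if -1 ≤ μ x then 1 else -μ x + Real.sqrt (μ x ^ 2 - 1)) ''
          Icc s₀ s)) :=
  stmt_5_general σ τ μ ψ hμ hψ
end

section
/- Let σ < τ be reals and let φ : [σ,τ] → ℝ be continuous. Set λ = (φ(τ) − φ(σ))/(τ − σ). Then for every ε > 0 there exist σ̃, τ̃ with σ ≤ σ̃ < τ̃ ≤ τ, τ̃ − σ̃ < ε, and (φ(τ̃) − φ(σ̃))/(τ̃ − σ̃) = λ. -/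
/-! Cut `[σ, τ]` into `N` pieces of length `h = (τ - σ) / N`. The increments of `φ` over the
pieces sum to `φ τ - φ σ`, so `x ↦ φ (x + h) - φ x - (φ τ - φ σ) / N` has zero sum over the
subdivision points; by the intermediate value theorem it vanishes somewhere, giving a chord of
length `h` with the same slope as the whole one. Taking `N` large makes `h < ε`. -/

open Set Finset

theorem IsPreconnected.exists_eq_zero_of_sum_eq_zero {X α ι : Type*} [TopologicalSpace X]
    [AddCommMonoid α] [LinearOrder α] [IsOrderedCancelAddMonoid α] [TopologicalSpace α]
    [OrderClosedTopology α] {S : Set X} (hS : IsPreconnected S) {f : X → α}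
    (hf : ContinuousOn f S) {s : Finset ι} (hs : s.Nonempty) {p : ι → X}
    (hp : ∀ i ∈ s, p i ∈ S) (hsum : ∑ i ∈ s, f (p i) = 0) : ∃ x ∈ S, f x = 0 := by
  obtain ⟨i, hi, hfi⟩ : ∃ i ∈ s, f (p i) ≤ 0 :=
    exists_le_of_sum_le hs (by simp [hsum])
  obtain ⟨j, hj, hfj⟩ : ∃ j ∈ s, 0 ≤ f (p j) :=
    exists_le_of_sum_le hs (by simp [hsum])
  exact hS.intermediate_value (hp i hi) (hp j hj) hf ⟨hfi, hfj⟩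

theorem exists_add_sub_eq_div_of_continuousOn {σ τ h : ℝ} {φ : ℝ → ℝ}
    (hφ : ContinuousOn φ (Icc σ τ)) (hh : 0 ≤ h) {N : ℕ} (hN : 0 < N) (hτ : τ = σ + N * h) :
    ∃ x, σ ≤ x ∧ x + h ≤ τ ∧ φ (x + h) - φ x = (φ τ - φ σ) / N := by
  set c := (φ τ - φ σ) / N
  have hmaps : MapsTo (· + h) (Icc σ (τ - h)) (Icc σ τ) :=
    fun x hx => ⟨by linarith [hx.1], by linarith [hx.2]⟩
  have hcont : ContinuousOn (fun x => φ (x + h) - φ x - c) (Icc σ (τ - h)) :=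
    ((hφ.comp (continuous_add_const h).continuousOn hmaps).sub
      (hφ.mono (Icc_subset_Icc_right (by linarith)))).sub continuousOn_const
  have hpts : ∀ k ∈ range N, σ + k * h ∈ Icc σ (τ - h) := by
    intro k hk
    have hk' : (k : ℝ) + 1 ≤ N := by exact_mod_cast mem_range.mp hk
    constructor <;> nlinarith [(k.cast_nonneg : (0 : ℝ) ≤ k)]
  have htelescope : ∑ k ∈ range N, (φ (σ + k * h + h) - φ (σ + k * h)) = φ τ - φ σ := by
    have := sum_range_sub (fun k : ℕ => φ (σ + k * h)) N
    simp only [Nat.cast_add, Nat.cast_one, add_mul, one_mul, ← add_assoc, Nat.cast_zero,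
      zero_mul, add_zero] at this
    rw [this, hτ]
  have hsum : ∑ k ∈ range N, (φ (σ + k * h + h) - φ (σ + k * h) - c) = 0 := by
    rw [sum_sub_distrib, htelescope, sum_const, card_range, nsmul_eq_mul,
      mul_div_cancel₀ _ (Nat.cast_ne_zero.mpr hN.ne'), sub_self]
  obtain ⟨x, hx, hx0⟩ := isPreconnected_Icc.exists_eq_zero_of_sum_eq_zero hcont
    (nonempty_range_iff.mpr hN.ne') hpts hsum
  exact ⟨x, hx.1, by linarith [hx.2], sub_eq_zero.mp hx0⟩

theorem stmt_6 (σ τ : ℝ) (hστ : σ < τ) (φ : ℝ → ℝ)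
    (hφ : ContinuousOn φ (Icc σ τ)) :
    ∀ ε > 0, ∃ σ' τ' : ℝ, σ ≤ σ' ∧ σ' < τ' ∧ τ' ≤ τ ∧ τ' - σ' < ε ∧
      (φ τ' - φ σ') / (τ' - σ') = (φ τ - φ σ) / (τ - σ) := by
  intro ε hε
  obtain ⟨N, hN⟩ := exists_nat_gt ((τ - σ) / ε)
  have hlen : 0 < τ - σ := sub_pos.mpr hστ
  have hN0 : (0 : ℝ) < N := (div_pos hlen hε).trans hN
  set h := (τ - σ) / N
  have hh : 0 < h := div_pos hlen hN0
  have hhε : h < ε := by rwa [div_lt_iff₀ hN0, mul_comm, ← div_lt_iff₀ hε]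
  obtain ⟨x, hσx, hxτ, hchord⟩ := exists_add_sub_eq_div_of_continuousOn hφ hh.le
    (by exact_mod_cast hN0) (by rw [mul_div_cancel₀ _ hN0.ne']; ring)
  refine ⟨x, x + h, hσx, by linarith, hxτ, by linarith, ?_⟩
  rw [hchord, add_sub_cancel_left, div_div_div_cancel_right₀ hN0.ne']
end

section
/- Let 0 < a ≤ ∞, let μ : (0,a) → ℝ be continuous with μ(s) ≤ −1 for all s ∈ (0,a), and let ψ : (0,a) → ℝ be differentiable with ψ'(s) = −(ψ(s)² + 2μ(s)ψ(s) + 1) for all s ∈ (0,a). If ψ(s₀) > 1 for some s₀ ∈ (0,a), then ψ(s) > 1 for all s ∈ [s₀, a). -/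
/-! With `φ = ψ - 1` and `μ ≤ -1`, the Riccati equation gives `φ' ≥ -φ²` wherever `φ > 0`.
A solution of such a differential inequality stays above the barrier
`t ↦ φ(s₀)/2 · exp (-φ(s₀) (t - s₀))`: where the two meet, the barrier value `β` lies in
`(0, φ(s₀))`, so `φ' ≥ -β² > -φ(s₀) β`, which is the slope of the barrier. -/

open Set Real

theorem half_mul_exp_le_of_neg_sq_le_deriv {f f' : ℝ → ℝ} {a b : ℝ}
    (hf : ContinuousOn f (Icc a b)) (hf' : ∀ x ∈ Ico a b, HasDerivWithinAt f (f' x) (Ici x) x)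
    (ha : 0 < f a) (bound : ∀ x ∈ Ico a b, 0 < f x → -f x ^ 2 ≤ f' x) :
    ∀ ⦃x⦄, x ∈ Icc a b → f a / 2 * exp (-f a * (x - a)) ≤ f x := by
  set B : ℝ → ℝ := fun x => -(f a / 2 * exp (-f a * (x - a)))
  have hB : ∀ x, HasDerivAt B (f a * (f a / 2 * exp (-f a * (x - a)))) x := fun x =>
    ((((hasDerivAt_id' x).sub_const a).const_mul (-f a)).exp.const_mul
      (f a / 2)).fun_neg.congr_deriv (by ring)
  have hB₀ : -f a ≤ B a := by
    simp only [B, sub_self, mul_zero, exp_zero, mul_one]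
    linarith
  have key := image_le_of_deriv_right_lt_deriv_boundary (f' := fun x => -f' x) hf.neg
    (fun x hx => (hf' x hx).neg) hB₀ hB ?_
  · intro x hx
    have := key hx
    simp only [B, Pi.neg_apply] at this
    linarith
  · intro x hx hfx
    have hβ : f x = f a / 2 * exp (-f a * (x - a)) := by simpa [B] using hfx
    have hexp_le : exp (-f a * (x - a)) ≤ 1 := exp_le_one_iff.mpr (by nlinarith [hx.1])
    have hpos : 0 < f x := by rw [hβ]; positivity
    have hlt : f x < f a := by rw [hβ]; nlinarith
    calc -f' x ≤ f x ^ 2 := by linarith [bound x hx hpos]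
      _ < f a * f x := by nlinarith
      _ = f a * (f a / 2 * exp (-f a * (x - a))) := by rw [hβ]

theorem neg_sq_sub_one_le_neg_riccati {m y : ℝ} (hm : m ≤ -1) (hy : 0 ≤ y) :
    -(y - 1) ^ 2 ≤ -(y ^ 2 + 2 * m * y + 1) := by
  nlinarith

theorem isOpen_setOf_pos_and_coe_lt (a : EReal) : IsOpen {x : ℝ | 0 < x ∧ (x : EReal) < a} :=
  isOpen_Ioi.inter (isOpen_Iio.preimage continuous_coe_real_ereal)

theorem stmt_7_general (a : EReal) (μ ψ : ℝ → ℝ)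
    (hμle : ∀ s : ℝ, 0 < s → (s : EReal) < a → μ s ≤ -1)
    (hψ : ∀ s : ℝ, 0 < s → (s : EReal) < a →
      HasDerivWithinAt ψ (-(ψ s ^ 2 + 2 * μ s * ψ s + 1))
        {x : ℝ | 0 < x ∧ (x : EReal) < a} s)
    (s₀ : ℝ) (hs₀pos : 0 < s₀) (hψs₀ : 1 < ψ s₀) :
    ∀ s : ℝ, s₀ ≤ s → (s : EReal) < a → 1 < ψ s := by
  intro s hs₀s hsa
  have hsub : Icc s₀ s ⊆ {x : ℝ | 0 < x ∧ (x : EReal) < a} := fun t ht =>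
    ⟨hs₀pos.trans_le ht.1, (EReal.coe_le_coe_iff.mpr ht.2).trans_lt hsa⟩
  have hderiv : ∀ t ∈ Icc s₀ s, HasDerivAt ψ (-(ψ t ^ 2 + 2 * μ t * ψ t + 1)) t := fun t ht =>
    (hψ t (hsub ht).1 (hsub ht).2).hasDerivAt
      ((isOpen_setOf_pos_and_coe_lt a).mem_nhds (hsub ht))
  have hbarrier := half_mul_exp_le_of_neg_sq_le_deriv (f := fun t => ψ t - 1)
    (fun t ht => (hderiv t ht).continuousAt.continuousWithinAt.sub continuousWithinAt_const)
    (fun t ht => ((hderiv t (Ico_subset_Icc_self ht)).sub_const 1).hasDerivWithinAt)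
    (sub_pos.mpr hψs₀)
    (fun t ht hpos => neg_sq_sub_one_le_neg_riccati
      (hμle t (hsub (Ico_subset_Icc_self ht)).1 (hsub (Ico_subset_Icc_self ht)).2)
      (by linarith))
    (right_mem_Icc.mpr hs₀s)
  have : 0 < (ψ s₀ - 1) / 2 * exp (-(ψ s₀ - 1) * (s - s₀)) := by
    have := sub_pos.mpr hψs₀; positivity
  linarith

theorem stmt_7 (a : EReal) (ha : 0 < a) (μ ψ : ℝ → ℝ)
    (hμcont : ContinuousOn μ {s : ℝ | 0 < s ∧ (s : EReal) < a})
    (hμle : ∀ s : ℝ, 0 < s → (s : EReal) < a → μ s ≤ -1)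
    (hψ : ∀ s : ℝ, 0 < s → (s : EReal) < a →
      HasDerivWithinAt ψ (-(ψ s ^ 2 + 2 * μ s * ψ s + 1))
        {x : ℝ | 0 < x ∧ (x : EReal) < a} s)
    (s₀ : ℝ) (hs₀pos : 0 < s₀) (hs₀lt : (s₀ : EReal) < a) (hψs₀ : 1 < ψ s₀) :
    ∀ s : ℝ, s₀ ≤ s → (s : EReal) < a → 1 < ψ s :=
  stmt_7_general a μ ψ hμle hψ s₀ hs₀pos hψs₀
end

section
/- Let A > 0, T > A, let μ : [A,T) → ℝ satisfy μ(s) ≥ −1 + 1/A for all s ∈ [A,T), and let ψ : [A,T) → ℝ be differentiable with ψ'(s) = −(ψ(s)² + 2μ(s)ψ(s) + 1) and ψ(s) > 1 for all s ∈ [A,T). Then T ≤ A + (A/2)·(ψ(A) − 1). In particular, a solution with ψ > 1 cannot exist on all of [A,∞) when μ ≥ −1 + 1/A there. -/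
/-! The identity `ψ² + 2μψ + 1 = (ψ - 1)² + 2(1 + μ)ψ` shows that, as long as `ψ ≥ 1` and
`μ ≥ -1 + 1/A`, the solution of the Riccati equation decreases with slope at most `-2/A`.
Starting from `ψ(A)`, it therefore reaches the level `1` within time `(A/2)(ψ(A) - 1)`. -/

open Set

theorem Convex.image_sub_le_mul_sub_of_hasDerivWithinAt_le {D : Set ℝ} (hD : Convex ℝ D)
    {f f' : ℝ → ℝ} {C : ℝ} (hf : ∀ x ∈ D, HasDerivWithinAt f (f' x) D x)
    (hf'C : ∀ x ∈ D, f' x ≤ C) {x y : ℝ} (hx : x ∈ D) (hy : y ∈ D) (hxy : x ≤ y) :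
    f y - f x ≤ C * (y - x) := by
  refine hD.image_sub_le_mul_sub_of_deriv_le (fun z hz => (hf z hz).continuousWithinAt)
    (fun z hz => ((hf z (interior_subset hz)).differentiableWithinAt).mono interior_subset)
    (fun z hz => ?_) x hx y hy hxy
  rw [((hf z (interior_subset hz)).hasDerivAt (mem_interior_iff_mem_nhds.1 hz)).deriv]
  exact hf'C z (interior_subset hz)

theorem two_div_le_sq_add_two_mul_mul_add_one {A μ ψ : ℝ} (hA : 0 < A) (hμ : -1 + 1 / A ≤ μ)
    (hψ : 1 ≤ ψ) : 2 / A ≤ ψ ^ 2 + 2 * μ * ψ + 1 := by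
  have hA' : 0 < 1 / A := one_div_pos.2 hA
  calc 2 / A = 2 * (1 / A) * 1 := by ring
    _ ≤ 2 * (1 + μ) * ψ := by gcongr <;> linarith
    _ ≤ (ψ - 1) ^ 2 + 2 * (1 + μ) * ψ := le_add_of_nonneg_left (sq_nonneg _)
    _ = ψ ^ 2 + 2 * μ * ψ + 1 := by ring

theorem stmt_8 (A T : ℝ) (hA : 0 < A) (hT : A < T) (μ ψ : ℝ → ℝ)
    (hμ : ∀ s ∈ Ico A T, -1 + 1 / A ≤ μ s)
    (hψ : ∀ s ∈ Ico A T,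
      HasDerivWithinAt ψ (-(ψ s ^ 2 + 2 * μ s * ψ s + 1)) (Ico A T) s)
    (hψ1 : ∀ s ∈ Ico A T, 1 < ψ s) :
    T ≤ A + (A / 2) * (ψ A - 1) := by
  have hA_mem : A ∈ Ico A T := left_mem_Ico.2 hT
  have hslope : ∀ s ∈ Ico A T, ψ s - ψ A ≤ -(2 / A) * (s - A) := fun s hs =>
    (convex_Ico A T).image_sub_le_mul_sub_of_hasDerivWithinAt_le hψ
      (fun t ht => neg_le_neg <|
        two_div_le_sq_add_two_mul_mul_add_one hA (hμ t ht) (hψ1 t ht).le) hA_mem hs hs.1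
  have hbound : Ico A T ⊆ Iic (A + (A / 2) * (ψ A - 1)) := fun s hs => by
    have hdrop : 2 / A * (s - A) ≤ ψ A - 1 := by linarith [hslope s hs, hψ1 s hs]
    calc s = A + A / 2 * (2 / A * (s - A)) := by field_simp; ring
      _ ≤ A + A / 2 * (ψ A - 1) := by gcongr
  have hT_closure : T ∈ closure (Ico A T) := by
    rw [closure_Ico hT.ne]
    exact right_mem_Icc.2 hT.le
  exact isClosed_Iic.closure_subset_iff.2 hbound hT_closure
end

section
/- Let a > 0 and let m : [0,a] → ℝ be continuous with m > 0. Then the infimum over all continuously differentiable u : [0,a] → ℝ with u(0) = 0 and u(a) = 1 of ∫₀ᵃ max(u'(s)² − u(s)², 0) · m(s)² ds is at most ( ∫₀ᵃ m(s)⁻² ds )⁻¹. -/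
/-!
With `w = m²` and `M = ∫₀ᵃ w⁻¹`, the competitor `u(s) = (∫₀ˢ w⁻¹) / M` has `u' = w⁻¹ / M`, so
`u'² w = w⁻¹ / M²` and `∫₀ᵃ u'² w = M⁻¹`: this is the equality case of Cauchy–Schwarz in
`1 = ∫₀ᵃ u' ≤ (∫₀ᵃ u'² w)^{1/2} M^{1/2}`. Since `max (u'² - u²) 0 ≤ u'²` and the functional is
nonnegative, the infimum is at most `M⁻¹`.
-/

open Set intervalIntegral MeasureTheory

theorem hasDerivWithinAt_integral_Icc {g : ℝ → ℝ} {b c s : ℝ} (hg : ContinuousOn g (Icc b c))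
    (hs : s ∈ Icc b c) :
    HasDerivWithinAt (fun x => ∫ t in b..x, g t) (g s) (Icc b c) s := by
  have : Fact (s ∈ Icc b c) := ⟨hs⟩
  have hint : IntervalIntegrable g volume b s :=
    (hg.mono (by rw [uIcc_of_le hs.1]; exact Icc_subset_Icc_right hs.2)).intervalIntegrable
  exact integral_hasDerivWithinAt_right hint
    (hg.stronglyMeasurableAtFilter_nhdsWithin measurableSet_Icc s) (hg.continuousWithinAt hs)

theorem integral_sq_inv_div_mul_self {w : ℝ → ℝ} {a : ℝ} (hw : ∀ s ∈ uIcc 0 a, w s ≠ 0) :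
    ∫ s in (0 : ℝ)..a, ((w s)⁻¹ / ∫ t in (0 : ℝ)..a, (w t)⁻¹) ^ 2 * w s
      = (∫ t in (0 : ℝ)..a, (w t)⁻¹)⁻¹ := by
  set M := ∫ t in (0 : ℝ)..a, (w t)⁻¹
  have hpoint : ∀ s ∈ uIcc 0 a, ((w s)⁻¹ / M) ^ 2 * w s = (w s)⁻¹ / M ^ 2 := by
    intro s hs
    field_simp [hw s hs]
  rw [integral_congr hpoint, intervalIntegral.integral_div, sq, div_self_mul_self']

theorem integral_max_sub_sq_mul_le {u u' w : ℝ → ℝ} {a : ℝ} (ha : 0 ≤ a)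
    (hu : ContinuousOn u (Icc 0 a)) (hu' : ContinuousOn u' (Icc 0 a))
    (hw : ContinuousOn w (Icc 0 a)) (hw_nonneg : ∀ s ∈ Icc 0 a, 0 ≤ w s) :
    ∫ s in (0 : ℝ)..a, max (u' s ^ 2 - u s ^ 2) 0 * w s ≤ ∫ s in (0 : ℝ)..a, u' s ^ 2 * w s := by
  refine integral_mono_on ha ?_ ?_ fun s hs => ?_
  · exact ((((hu'.pow 2).sub (hu.pow 2)).sup continuousOn_const).mul hw).intervalIntegrable_of_Icc
      ha
  · exact ((hu'.pow 2).mul hw).intervalIntegrable_of_Icc ha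
  · exact mul_le_mul_of_nonneg_right
      (max_le (sub_le_self _ (sq_nonneg _)) (sq_nonneg _)) (hw_nonneg s hs)

theorem stmt_11 (a : ℝ) (ha : 0 < a) (m : ℝ → ℝ)
    (hm : ContinuousOn m (Icc 0 a))
    (hmpos : ∀ s ∈ Icc (0 : ℝ) a, 0 < m s) :
    sInf {I : ℝ | ∃ u u' : ℝ → ℝ,
        (∀ s ∈ Icc (0 : ℝ) a, HasDerivWithinAt u (u' s) (Icc 0 a) s) ∧
        ContinuousOn u' (Icc 0 a) ∧ u 0 = 0 ∧ u a = 1 ∧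
        I = ∫ s in (0 : ℝ)..a, max (u' s ^ 2 - u s ^ 2) 0 * m s ^ 2}
      ≤ (∫ s in (0 : ℝ)..a, (m s ^ 2)⁻¹)⁻¹ := by
  have hm_sq_pos : ∀ s ∈ Icc 0 a, 0 < m s ^ 2 := fun s hs => pow_pos (hmpos s hs) 2
  have hm_sq : ContinuousOn (fun s => m s ^ 2) (Icc 0 a) := hm.pow 2
  have hg : ContinuousOn (fun s => (m s ^ 2)⁻¹) (Icc 0 a) :=
    hm_sq.inv₀ fun s hs => (hm_sq_pos s hs).ne'
  set M := ∫ s in (0 : ℝ)..a, (m s ^ 2)⁻¹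
  have hM : 0 < M := intervalIntegral_pos_of_pos_on (hg.intervalIntegrable_of_Icc ha.le)
    (fun s hs => inv_pos.mpr (hm_sq_pos s (Ioo_subset_Icc_self hs))) ha
  set u : ℝ → ℝ := fun x => (∫ t in (0 : ℝ)..x, (m t ^ 2)⁻¹) / M
  set u' : ℝ → ℝ := fun s => (m s ^ 2)⁻¹ / M
  have hu : ∀ s ∈ Icc 0 a, HasDerivWithinAt u (u' s) (Icc 0 a) s := fun s hs =>
    (hasDerivWithinAt_integral_Icc hg hs).div_const M
  refine csInf_le_of_le (b := ∫ s in (0 : ℝ)..a, max (u' s ^ 2 - u s ^ 2) 0 * m s ^ 2) ?_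
    ⟨u, u', hu, hg.div_const M, by simp [u], div_self hM.ne', rfl⟩ ?_
  · refine ⟨0, ?_⟩
    rintro I ⟨v, v', -, -, -, -, rfl⟩
    exact integral_nonneg ha.le fun s _ => mul_nonneg (le_max_right _ _) (sq_nonneg _)
  · calc ∫ s in (0 : ℝ)..a, max (u' s ^ 2 - u s ^ 2) 0 * m s ^ 2
        ≤ ∫ s in (0 : ℝ)..a, u' s ^ 2 * m s ^ 2 :=
          integral_max_sub_sq_mul_le ha.le (fun s hs => (hu s hs).continuousWithinAt)
            (hg.div_const M) hm_sq fun s hs => (hm_sq_pos s hs).le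
      _ = M⁻¹ := integral_sq_inv_div_mul_self fun s hs =>
          (hm_sq_pos s (by rwa [uIcc_of_le ha.le] at hs)).ne'
end

section
/- Let I ⊆ ℝ be an open interval, let m : I → ℝ be continuously differentiable with m > 0, set μ = m'/m, and let ψ : I → ℝ be differentiable with ψ'(s) = −(ψ(s)² + 2μ(s)ψ(s) + 1) for all s ∈ I. Define Θ : I → ℝ by Θ(a) = e^{2a} · m(a)² · ψ(a). Then Θ'(a) = −e^{2a} · m(a)² · (ψ(a) − 1)² for all a ∈ I; in particular Θ is nonincreasing on I. -/
/-! The weight `e^{2a} m(a)²` has logarithmic derivative `2 + 2μ`, so multiplying the Riccati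
equation by it cancels the term `2μψ` and completes the square:
`Θ' = e^{2a} m² (2ψ + 2μψ + ψ') = -e^{2a} m² (ψ - 1)² ≤ 0`. -/

open Real

theorem hasDerivAt_exp_two_mul_mul_sq_mul_of_riccati {m ψ : ℝ → ℝ} {m' μ a : ℝ}
    (hm : HasDerivAt m m' a) (hμ : μ = m' / m a)
    (hψ : HasDerivAt ψ (-(ψ a ^ 2 + 2 * μ * ψ a + 1)) a) :
    HasDerivAt (fun x => exp (2 * x) * m x ^ 2 * ψ x)
      (-(exp (2 * a) * m a ^ 2 * (ψ a - 1) ^ 2)) a := by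
  have hexp : HasDerivAt (fun x => exp (2 * x)) (exp (2 * a) * 2) a :=
    ((hasDerivAt_id a).const_mul 2).exp.congr_deriv (by simp)
  refine ((hexp.fun_mul (hm.fun_pow 2)).fun_mul hψ).congr_deriv ?_
  -- `m² · (m' / m) = m · m'` also holds when `m a = 0`, both sides being `0`.
  have hweight : m a ^ 2 * μ = m a * m' := by
    rcases eq_or_ne (m a) 0 with h | h
    · simp [h]
    · rw [hμ]; field_simp
  linear_combination (-2 * exp (2 * a) * ψ a) * hweight

theorem antitoneOn_of_hasDerivAt_nonpos {D : Set ℝ} (hD : Convex ℝ D) {f f' : ℝ → ℝ}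
    (hf : ∀ x ∈ D, HasDerivAt f (f' x) x) (hf' : ∀ x ∈ D, f' x ≤ 0) : AntitoneOn f D :=
  antitoneOn_of_hasDerivWithinAt_nonpos hD
    (fun x hx => (hf x hx).continuousAt.continuousWithinAt)
    (fun x hx => (hf x (interior_subset hx)).hasDerivWithinAt)
    (fun x hx => hf' x (interior_subset hx))

theorem stmt_12_general (I : Set ℝ) (hIconv : Convex ℝ I)
    (m m' μ ψ : ℝ → ℝ)
    (hm : ∀ s ∈ I, HasDerivAt m (m' s) s)
    (hμ : ∀ s ∈ I, μ s = m' s / m s)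
    (hψ : ∀ s ∈ I, HasDerivAt ψ (-(ψ s ^ 2 + 2 * μ s * ψ s + 1)) s) :
    (∀ a ∈ I, HasDerivAt (fun x => Real.exp (2 * x) * m x ^ 2 * ψ x)
        (-(Real.exp (2 * a) * m a ^ 2 * (ψ a - 1) ^ 2)) a) ∧
    AntitoneOn (fun x => Real.exp (2 * x) * m x ^ 2 * ψ x) I := by
  have hΘ : ∀ a ∈ I, HasDerivAt (fun x => Real.exp (2 * x) * m x ^ 2 * ψ x)
      (-(Real.exp (2 * a) * m a ^ 2 * (ψ a - 1) ^ 2)) a := fun a ha =>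
    hasDerivAt_exp_two_mul_mul_sq_mul_of_riccati (hm a ha) (hμ a ha) (hψ a ha)
  exact ⟨hΘ, antitoneOn_of_hasDerivAt_nonpos hIconv hΘ fun a _ =>
    neg_nonpos.mpr (by positivity)⟩

theorem stmt_12 (I : Set ℝ) (hIopen : IsOpen I) (hIconv : Convex ℝ I)
    (m m' μ ψ : ℝ → ℝ)
    (hm : ∀ s ∈ I, HasDerivAt m (m' s) s)
    (hm'c : ContinuousOn m' I)
    (hmpos : ∀ s ∈ I, 0 < m s)
    (hμ : ∀ s ∈ I, μ s = m' s / m s)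
    (hψ : ∀ s ∈ I, HasDerivAt ψ (-(ψ s ^ 2 + 2 * μ s * ψ s + 1)) s) :
    (∀ a ∈ I, HasDerivAt (fun x => Real.exp (2 * x) * m x ^ 2 * ψ x)
        (-(Real.exp (2 * a) * m a ^ 2 * (ψ a - 1) ^ 2)) a) ∧
    AntitoneOn (fun x => Real.exp (2 * x) * m x ^ 2 * ψ x) I :=
  stmt_12_general I hIconv m m' μ ψ hm hμ hψ
end

section
/- Let θ ∈ (0,π), set α = cos θ and β = sin θ, and define u : [0,∞) → ℝ by u(s) = e^{αs} · sin(βs)/β. Then u(0) = 0 and u''(s) − 2α u'(s) + u(s) = 0 for all s; moreover, for every s with 0 < s < (π−θ)/β one has u(s) > 0 and u'(s)/u(s) = sin(βs + θ)/sin(βs); in particular u'(s)/u(s) > 1 for 0 < s < (π−θ)/(2β), and u'(a*) = u(a*) at a* = (π−θ)/(2β). -/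
open Real

/-!
With `a = cos θ` and `b = sin θ`, the function `u s = e^{a s} sin (b s) / b` solves
`u'' - 2 a u' + (a² + b²) u = 0`, and `a² + b² = 1`. The addition formula turns
`u' s = e^{a s} (a sin (b s) + b cos (b s)) / b` into `e^{a s} sin (b s + θ) / b`, so
`u' / u = sin (b s + θ) / sin (b s)`. This ratio exceeds `1` as long as `b s + θ` is closer to
`π / 2` than `b s` is, and equals `1` exactly when `b s + θ = π - b s`.
-/

section ExpMulSin

variable (a b : ℝ)

theorem hasDerivAt_exp_mul_sin_div (s : ℝ) :
    HasDerivAt (fun s => exp (a * s) * sin (b * s) / b)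
      (exp (a * s) * (a * sin (b * s) + b * cos (b * s)) / b) s := by
  have hexp := ((hasDerivAt_id' s).const_mul a).exp
  have hsin := ((hasDerivAt_id' s).const_mul b).sin
  exact ((hexp.mul hsin).div_const b).congr_deriv (by ring)

theorem deriv_exp_mul_sin_div :
    deriv (fun s => exp (a * s) * sin (b * s) / b) =
      fun s => exp (a * s) * (a * sin (b * s) + b * cos (b * s)) / b :=
  funext fun s => (hasDerivAt_exp_mul_sin_div a b s).deriv

theorem hasDerivAt_exp_mul_sin_cos_div (s : ℝ) :
    HasDerivAt (fun s => exp (a * s) * (a * sin (b * s) + b * cos (b * s)) / b)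
      (exp (a * s) * ((a ^ 2 - b ^ 2) * sin (b * s) + 2 * a * b * cos (b * s)) / b) s := by
  have hexp := ((hasDerivAt_id' s).const_mul a).exp
  have hlin := (hasDerivAt_id' s).const_mul b
  exact ((hexp.mul ((hlin.sin.const_mul a).add (hlin.cos.const_mul b))).div_const b).congr_deriv
    (by simp only [Pi.add_apply]; ring)

theorem deriv_deriv_exp_mul_sin_div_sub (s : ℝ) :
    deriv (deriv fun s => exp (a * s) * sin (b * s) / b) s -
        2 * a * deriv (fun s => exp (a * s) * sin (b * s) / b) s +
        (a ^ 2 + b ^ 2) * (exp (a * s) * sin (b * s) / b) = 0 := by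
  rw [deriv_exp_mul_sin_div, (hasDerivAt_exp_mul_sin_cos_div a b s).deriv]
  ring

variable {a b}

theorem exp_mul_sin_div_pos {s : ℝ} (hb : 0 < b) (hs₀ : 0 < b * s) (hs₁ : b * s < π) :
    0 < exp (a * s) * sin (b * s) / b :=
  div_pos (mul_pos (exp_pos _) (sin_pos_of_pos_of_lt_pi hs₀ hs₁)) hb

end ExpMulSin

theorem deriv_exp_cos_mul_sin_sin_mul (θ : ℝ) :
    deriv (fun s => exp (cos θ * s) * sin (sin θ * s) / sin θ) =
      fun s => exp (cos θ * s) * sin (sin θ * s + θ) / sin θ := by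
  rw [deriv_exp_mul_sin_div]
  funext s
  rw [sin_add]
  ring

theorem deriv_div_exp_cos_mul_sin_sin_mul {θ : ℝ} (hθ : sin θ ≠ 0) (s : ℝ) :
    deriv (fun s => exp (cos θ * s) * sin (sin θ * s) / sin θ) s /
        (exp (cos θ * s) * sin (sin θ * s) / sin θ) =
      sin (sin θ * s + θ) / sin (sin θ * s) := by
  rw [deriv_exp_cos_mul_sin_sin_mul, div_div_div_cancel_right₀ hθ,
    mul_div_mul_left _ _ (exp_pos _).ne']

theorem one_lt_sin_add_div_sin {x θ : ℝ} (hx : 0 < x) (hθ : 0 < θ) (h : 2 * x + θ < π) :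
    1 < sin (x + θ) / sin x := by
  have hsin : 0 < sin x := sin_pos_of_pos_of_lt_pi hx (by linarith)
  have hhalf : 0 < sin (θ / 2) := sin_pos_of_pos_of_lt_pi (by linarith) (by linarith)
  have hcos : 0 < cos (x + θ / 2) := cos_pos_of_mem_Ioo ⟨by linarith, by linarith⟩
  have hsub : sin (x + θ) - sin x = 2 * sin (θ / 2) * cos (x + θ / 2) := by
    rw [sin_sub_sin]
    ring_nf
  have hpos : 0 < sin (x + θ) - sin x := by
    rw [hsub]
    positivity
  rw [one_lt_div hsin]
  linarith

theorem stmt_18 (θ : ℝ) (hθ : θ ∈ Set.Ioo 0 π) :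
    (fun s : ℝ => Real.exp (Real.cos θ * s) * Real.sin (Real.sin θ * s) / Real.sin θ) 0 = 0 ∧
    (∀ s : ℝ,
      deriv (deriv (fun s : ℝ =>
          Real.exp (Real.cos θ * s) * Real.sin (Real.sin θ * s) / Real.sin θ)) s -
        2 * Real.cos θ *
          deriv (fun s : ℝ =>
            Real.exp (Real.cos θ * s) * Real.sin (Real.sin θ * s) / Real.sin θ) s +
        (fun s : ℝ =>
          Real.exp (Real.cos θ * s) * Real.sin (Real.sin θ * s) / Real.sin θ) s = 0) ∧
    (∀ s : ℝ, 0 < s → s < (π - θ) / Real.sin θ →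
      0 < (fun s : ℝ =>
          Real.exp (Real.cos θ * s) * Real.sin (Real.sin θ * s) / Real.sin θ) s ∧
      deriv (fun s : ℝ =>
          Real.exp (Real.cos θ * s) * Real.sin (Real.sin θ * s) / Real.sin θ) s /
        (fun s : ℝ =>
          Real.exp (Real.cos θ * s) * Real.sin (Real.sin θ * s) / Real.sin θ) s =
        Real.sin (Real.sin θ * s + θ) / Real.sin (Real.sin θ * s)) ∧
    (∀ s : ℝ, 0 < s → s < (π - θ) / (2 * Real.sin θ) →
      1 < deriv (fun s : ℝ =>
          Real.exp (Real.cos θ * s) * Real.sin (Real.sin θ * s) / Real.sin θ) s /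
        (fun s : ℝ =>
          Real.exp (Real.cos θ * s) * Real.sin (Real.sin θ * s) / Real.sin θ) s) ∧
    deriv (fun s : ℝ =>
        Real.exp (Real.cos θ * s) * Real.sin (Real.sin θ * s) / Real.sin θ)
        ((π - θ) / (2 * Real.sin θ)) =
      (fun s : ℝ =>
        Real.exp (Real.cos θ * s) * Real.sin (Real.sin θ * s) / Real.sin θ)
        ((π - θ) / (2 * Real.sin θ)) := by
  obtain ⟨hθ₀, hθπ⟩ := hθ
  have hb : 0 < sin θ := sin_pos_of_pos_of_lt_pi hθ₀ hθπ
  refine ⟨by simp, fun s => ?_, fun s hs₀ hs₁ => ⟨?_, ?_⟩, fun s hs₀ hs₁ => ?_, ?_⟩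
  · simpa [cos_sq_add_sin_sq] using deriv_deriv_exp_mul_sin_div_sub (cos θ) (sin θ) s
  · have := (lt_div_iff₀ hb).mp hs₁
    exact exp_mul_sin_div_pos hb (by positivity) (by linarith)
  · exact deriv_div_exp_cos_mul_sin_sin_mul hb.ne' s
  · have := (lt_div_iff₀ (by positivity)).mp hs₁
    rw [deriv_div_exp_cos_mul_sin_sin_mul hb.ne']
    exact one_lt_sin_add_div_sin (by positivity) hθ₀ (by linarith)
  · have hstar : sin θ * ((π - θ) / (2 * sin θ)) = (π - θ) / 2 := by field_simp
    simp only [deriv_exp_cos_mul_sin_sin_mul, hstar,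
      show (π - θ) / 2 + θ = π - (π - θ) / 2 by ring, sin_pi_sub]
end

section
/- Let r > 0 and t > 0, and define J : ℝ → ℝ by J(α) = t·e^{αt}·(r² − α²). Set α₊ = (√(1 + (rt)²) − 1)/t. Then 0 < α₊ < r, and for every α ∈ ℝ one has J(α) ≤ J(α₊), with J(α₊) = e^{√(1+(rt)²) − 1} · (2/t) · ( √(1+(rt)²) − 1 ). -/
/-!
The critical point α₊ of `J(α) = t e^{αt} (r² - α²)` is characterised by `t (r² - α₊²) = 2 α₊`,
i.e. it is the positive root of `t α² + 2α - t r² = 0`. At such a point `J` dominates everything: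
`t (r² - α²) = 2α₊ (1 + (α₊ - α) t) - t (α₊ - α)² ≤ 2α₊ e^{(α₊ - α) t}`, and multiplying by `e^{αt}`
gives `J(α) ≤ 2α₊ e^{α₊ t} = J(α₊)`.
-/

open Real

theorem mul_exp_mul_mul_sub_sq_le {r t a : ℝ} (ht : 0 ≤ t) (ha : 0 ≤ a)
    (hcrit : t * (r ^ 2 - a ^ 2) = 2 * a) (α : ℝ) :
    t * exp (α * t) * (r ^ 2 - α ^ 2) ≤ t * exp (a * t) * (r ^ 2 - a ^ 2) := by
  have hquad : t * (r ^ 2 - α ^ 2) ≤ 2 * a * ((a - α) * t + 1) := by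
    nlinarith [mul_nonneg ht (sq_nonneg (a - α))]
  have hexp : exp (a * t) = exp (α * t) * exp ((a - α) * t) := by
    rw [← exp_add]; ring_nf
  calc t * exp (α * t) * (r ^ 2 - α ^ 2) = exp (α * t) * (t * (r ^ 2 - α ^ 2)) := by ring
    _ ≤ exp (α * t) * (2 * a * exp ((a - α) * t)) := by
        refine mul_le_mul_of_nonneg_left (hquad.trans ?_) (exp_pos _).le
        exact mul_le_mul_of_nonneg_left (add_one_le_exp _) (by positivity)
    _ = t * exp (a * t) * (r ^ 2 - a ^ 2) := by rw [hexp, ← hcrit]; ring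

section CriticalPoint

variable {r t : ℝ}

theorem sqrt_one_add_sq_sub_one_div_mul (ht : t ≠ 0) :
    (√(1 + (r * t) ^ 2) - 1) / t * t = √(1 + (r * t) ^ 2) - 1 :=
  div_mul_cancel₀ _ ht

theorem mul_sq_sub_sq_sqrt_one_add_sq_sub_one_div (ht : t ≠ 0) :
    t * (r ^ 2 - ((√(1 + (r * t) ^ 2) - 1) / t) ^ 2) = 2 * ((√(1 + (r * t) ^ 2) - 1) / t) := by
  have hsq : ((√(1 + (r * t) ^ 2) - 1) / t * t + 1) ^ 2 = 1 + (r * t) ^ 2 := by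
    rw [sqrt_one_add_sq_sub_one_div_mul ht, sub_add_cancel, sq_sqrt (by positivity)]
  generalize (√(1 + (r * t) ^ 2) - 1) / t = a at hsq ⊢
  apply mul_left_cancel₀ ht
  linear_combination -hsq

theorem one_lt_sqrt_one_add_sq (hr : r ≠ 0) (ht : t ≠ 0) : 1 < √(1 + (r * t) ^ 2) := by
  rw [lt_sqrt zero_le_one]
  have : 0 < (r * t) ^ 2 := by positivity
  linarith

theorem sqrt_one_add_sq_sub_one_div_pos (hr : r ≠ 0) (ht : 0 < t) :
    0 < (√(1 + (r * t) ^ 2) - 1) / t :=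
  div_pos (sub_pos.mpr (one_lt_sqrt_one_add_sq hr ht.ne')) ht

theorem sqrt_one_add_sq_sub_one_div_lt (hr : 0 < r) (ht : 0 < t) :
    (√(1 + (r * t) ^ 2) - 1) / t < r := by
  have ha := sqrt_one_add_sq_sub_one_div_pos hr.ne' ht
  have hcrit := mul_sq_sub_sq_sqrt_one_add_sq_sub_one_div (r := r) ht.ne'
  have : ((√(1 + (r * t) ^ 2) - 1) / t) ^ 2 < r ^ 2 := by nlinarith
  exact lt_of_pow_lt_pow_left₀ 2 hr.le this

end CriticalPoint

theorem stmt_19 (r t : ℝ) (hr : 0 < r) (ht : 0 < t) :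
    0 < (Real.sqrt (1 + (r * t) ^ 2) - 1) / t ∧
    (Real.sqrt (1 + (r * t) ^ 2) - 1) / t < r ∧
    (∀ α : ℝ, t * Real.exp (α * t) * (r ^ 2 - α ^ 2) ≤
      t * Real.exp (((Real.sqrt (1 + (r * t) ^ 2) - 1) / t) * t) *
        (r ^ 2 - ((Real.sqrt (1 + (r * t) ^ 2) - 1) / t) ^ 2)) ∧
    t * Real.exp (((Real.sqrt (1 + (r * t) ^ 2) - 1) / t) * t) *
        (r ^ 2 - ((Real.sqrt (1 + (r * t) ^ 2) - 1) / t) ^ 2) =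
      Real.exp (Real.sqrt (1 + (r * t) ^ 2) - 1) * (2 / t) *
        (Real.sqrt (1 + (r * t) ^ 2) - 1) := by
  have hpos := sqrt_one_add_sq_sub_one_div_pos hr.ne' ht
  have hcrit := mul_sq_sub_sq_sqrt_one_add_sq_sub_one_div (r := r) ht.ne'
  refine ⟨hpos, sqrt_one_add_sq_sub_one_div_lt hr ht,
    mul_exp_mul_mul_sub_sq_le ht.le hpos.le hcrit, ?_⟩
  rw [sqrt_one_add_sq_sub_one_div_mul ht.ne', mul_right_comm, hcrit]
  ring
end
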